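/- Let R = ⨁_{i∈Z} R_i and S = ⨁_{i∈Z} S_i be Z-graded k-algebras and a ≥ 1. The a-Segre product, defined as ⨁_{i∈Z} R_i ⊗_k M_i where M_i is the a×a matrix of spaces with (p,q)-entry S_{i+p−q} (0 ≤ p,q ≤ a−1), is an associative unital graded k-algebra under the natural matrix-and-tensor multiplication, and for a = 1 it coincides with the usual Segre product ⨁_i R_i ⊗_k S_i. -/

import Mathlib

/-!
The pieces contain `1 ⊗ 1` and are multiplicatively closed because the degree shifts
`(i + p - l) + (j + l - q) = (i + j) + p - q` telescope along a matrix product. They are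
independent because the degree-`i` projection of `A` tensored with the entrywise projection of
`M` onto the degrees `i + p - q` is the identity on the `i`-th piece and kills every other piece.
For `a = 1`, the identification `Matrix (Fin 1) (Fin 1) B ≅ B` is an algebra isomorphism, and
it carries `M_i` onto `S_i`.
-/

open TensorProduct

noncomputable section

variable (k : Type) [CommRing k]
variable (A : Type) [Ring A] [Algebra k A] (𝒜 : ℤ → Submodule k A) [GradedRing 𝒜]
variable (B : Type) [Ring B] [Algebra k B] (ℬ : ℤ → Submodule k B) [GradedRing ℬ]

/-- The submodule of `a×a` matrices whose `(p,q)`-entry lies in `S_{i+p−q}`. -/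
def matPiece (a : ℕ) (i : ℤ) : Submodule k (Matrix (Fin a) (Fin a) B) where
  carrier := {m | ∀ p q : Fin a, m p q ∈ ℬ (i + (p : ℤ) - (q : ℤ))}
  add_mem' := fun hm hm' p q => (ℬ _).add_mem (hm p q) (hm' p q)
  zero_mem' := fun p q => (ℬ _).zero_mem
  smul_mem' := fun c m hm p q => (ℬ _).smul_mem c (hm p q)

/-- The degree-`i` piece `R_i ⊗_k M_i` of the `a`-Segre product, as a submodule of
`A ⊗_k Matrix (Fin a) (Fin a) B`. -/
def segrePiece (a : ℕ) (i : ℤ) : Submodule k (A ⊗[k] Matrix (Fin a) (Fin a) B) :=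
  LinearMap.range (TensorProduct.map (𝒜 i).subtype (matPiece k B ℬ a i).subtype)

/-- The canonical identification `Matrix (Fin 1) (Fin 1) B ≅ B`. -/
def matOne : Matrix (Fin 1) (Fin 1) B ≃ₗ[k] B where
  toFun m := m 0 0
  map_add' _ _ := rfl
  map_smul' _ _ := rfl
  invFun b := Matrix.of fun _ _ => b
  left_inv m := by
    ext p q
    fin_cases p <;> fin_cases q <;> rfl
  right_inv b := rfl

/-- The induced identification `A ⊗ Matrix (Fin 1) (Fin 1) B ≅ A ⊗ B`. -/
def collapse : (A ⊗[k] Matrix (Fin 1) (Fin 1) B) ≃ₗ[k] (A ⊗[k] B) :=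
  TensorProduct.congr (LinearEquiv.refl k A) (matOne k B)

namespace TensorProduct

variable {R P Q : Type*} [CommSemiring R] [AddCommMonoid P] [Module R P]
  [AddCommMonoid Q] [Module R Q]

lemma map_comp_mapIncl_eq_self {p : Submodule R P} {q : Submodule R Q}
    {f : P →ₗ[R] P} {g : Q →ₗ[R] Q}
    (hf : f ∘ₗ p.subtype = p.subtype) (hg : g ∘ₗ q.subtype = q.subtype) :
    map f g ∘ₗ mapIncl p q = mapIncl p q := by
  rw [mapIncl, ← map_comp, hf, hg]

lemma map_comp_mapIncl_eq_zero {p : Submodule R P} {q : Submodule R Q}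
    {f : P →ₗ[R] P} (g : Q →ₗ[R] Q) (hf : f ∘ₗ p.subtype = 0) :
    map f g ∘ₗ mapIncl p q = 0 := by
  rw [mapIncl, ← map_comp, hf, map_zero_left]

lemma iSupIndep_range_mapIncl {ι : Type*} {p : ι → Submodule R P} {q : ι → Submodule R Q}
    (f : ι → P →ₗ[R] P) (g : ι → Q →ₗ[R] Q)
    (hf_self : ∀ i, f i ∘ₗ (p i).subtype = (p i).subtype)
    (hf_ne : ∀ i j, i ≠ j → f i ∘ₗ (p j).subtype = 0)
    (hg_self : ∀ i, g i ∘ₗ (q i).subtype = (q i).subtype) :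
    iSupIndep fun i => LinearMap.range (mapIncl (p i) (q i)) := by
  intro i
  rw [Submodule.disjoint_def]
  rintro _ ⟨y, rfl⟩ hy_rest
  have hker : (⨆ j, ⨆ (_ : j ≠ i), LinearMap.range (mapIncl (p j) (q j))) ≤
      LinearMap.ker (map (f i) (g i)) :=
    iSup₂_le fun j hj => LinearMap.range_le_ker_iff.mpr
      (map_comp_mapIncl_eq_zero _ (hf_ne i j (Ne.symm hj)))
  rw [← LinearMap.congr_fun (map_comp_mapIncl_eq_self (hf_self i) (hg_self i)) y]
  exact hker hy_rest

lemma range_mapIncl_mul_le {A B : Type*} [Semiring A] [Algebra R A] [Semiring B] [Algebra R B]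
    (p p' : Submodule R A) (q q' : Submodule R B) :
    LinearMap.range (mapIncl p q) * LinearMap.range (mapIncl p' q') ≤
      LinearMap.range (mapIncl (p * p') (q * q')) := by
  rw [range_map_eq_span_tmul, range_map_eq_span_tmul, Submodule.span_mul_span,
    Submodule.span_le]
  rintro _ ⟨_, ⟨m, n, rfl⟩, _, ⟨m', n', rfl⟩, rfl⟩
  exact ⟨⟨m * m', Submodule.mul_mem_mul m.2 m'.2⟩ ⊗ₜ ⟨n * n', Submodule.mul_mem_mul n.2 n'.2⟩,
    (Algebra.TensorProduct.tmul_mul_tmul _ _ _ _).symm⟩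

end TensorProduct

section matPiece

variable {k} {S : Type} [Ring S] [Algebra k S] (𝒮 : ℤ → Submodule k S)

lemma one_mem_matPiece [SetLike.GradedOne 𝒮] (a : ℕ) :
    (1 : Matrix (Fin a) (Fin a) S) ∈ matPiece k S 𝒮 a 0 := by
  intro p q
  by_cases h : p = q
  · subst h
    simp [SetLike.one_mem_graded 𝒮]
  · simp [Matrix.one_apply_ne h]

lemma matPiece_mul_le [SetLike.GradedMul 𝒮] (a : ℕ) (i j : ℤ) :
    matPiece k S 𝒮 a i * matPiece k S 𝒮 a j ≤ matPiece k S 𝒮 a (i + j) := by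
  refine Submodule.mul_le.mpr fun m hm m' hm' p q => ?_
  rw [Matrix.mul_apply]
  refine Submodule.sum_mem _ fun l _ => ?_
  have hdeg : i + (p : ℤ) - l + (j + l - q) = i + j + p - q := by ring
  exact hdeg ▸ SetLike.mul_mem_graded (hm p l) (hm' l q)

def matPieceProj [GradedAlgebra 𝒮] (a : ℕ) (i : ℤ) :
    Matrix (Fin a) (Fin a) S →ₗ[k] Matrix (Fin a) (Fin a) S where
  toFun m := Matrix.of fun p q => GradedAlgebra.proj 𝒮 (i + p - q) (m p q)
  map_add' m m' := by ext; simp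
  map_smul' c m := by ext; simp

lemma matPieceProj_comp_subtype_self [GradedAlgebra 𝒮] (a : ℕ) (i : ℤ) :
    matPieceProj 𝒮 a i ∘ₗ (matPiece k S 𝒮 a i).subtype = (matPiece k S 𝒮 a i).subtype := by
  ext m p q
  exact DirectSum.decompose_of_mem_same 𝒮 (m.2 p q)

lemma map_matOne_matPiece (i : ℤ) : (matPiece k S 𝒮 1 i).map (matOne k S).toLinearMap = 𝒮 i := by
  ext s
  constructor
  · rintro ⟨m, hm, rfl⟩
    show m 0 0 ∈ 𝒮 i
    simpa using hm 0 0
  · intro hs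
    refine ⟨Matrix.of fun _ _ => s, fun p q => ?_, rfl⟩
    simpa [Subsingleton.elim p 0, Subsingleton.elim q 0] using hs

def matOneAlgEquiv : Matrix (Fin 1) (Fin 1) S ≃ₐ[k] S :=
  AlgEquiv.ofLinearEquiv (matOne k S) rfl fun m m' => by
    show (m * m') 0 0 = m 0 0 * m' 0 0
    simp [Matrix.mul_apply]

end matPiece

namespace GradedAlgebra

variable {ι R C : Type*} [DecidableEq ι] [AddMonoid ι] [CommSemiring R] [Semiring C]
  [Algebra R C] (𝒞 : ι → Submodule R C) [GradedAlgebra 𝒞]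

lemma proj_comp_subtype_self (i : ι) : proj 𝒞 i ∘ₗ (𝒞 i).subtype = (𝒞 i).subtype := by
  ext x
  exact DirectSum.decompose_of_mem_same 𝒞 x.2

lemma proj_comp_subtype_of_ne {i j : ι} (h : i ≠ j) : proj 𝒞 i ∘ₗ (𝒞 j).subtype = 0 := by
  ext x
  exact DirectSum.decompose_of_mem_ne 𝒞 x.2 (Ne.symm h)

end GradedAlgebra

section segrePiece

variable {k} {R S : Type} [Ring R] [Algebra k R] [Ring S] [Algebra k S]
  (ℛ : ℤ → Submodule k R) (𝒮 : ℤ → Submodule k S)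

lemma one_mem_segrePiece [SetLike.GradedOne ℛ] [SetLike.GradedOne 𝒮] (a : ℕ) :
    (1 : R ⊗[k] Matrix (Fin a) (Fin a) S) ∈ segrePiece k R ℛ S 𝒮 a 0 :=
  ⟨⟨1, SetLike.one_mem_graded ℛ⟩ ⊗ₜ ⟨1, one_mem_matPiece 𝒮 a⟩, rfl⟩

lemma segrePiece_mul_le [SetLike.GradedMul ℛ] [SetLike.GradedMul 𝒮] (a : ℕ) (i j : ℤ) :
    segrePiece k R ℛ S 𝒮 a i * segrePiece k R ℛ S 𝒮 a j ≤ segrePiece k R ℛ S 𝒮 a (i + j) :=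
  (range_mapIncl_mul_le _ _ _ _).trans <| range_mapIncl_mono
    (Submodule.mul_le.mpr fun _ hr _ hr' => SetLike.mul_mem_graded hr hr')
    (matPiece_mul_le 𝒮 a i j)

lemma iSupIndep_segrePiece [GradedAlgebra ℛ] [GradedAlgebra 𝒮] (a : ℕ) :
    iSupIndep (segrePiece k R ℛ S 𝒮 a) :=
  iSupIndep_range_mapIncl (GradedAlgebra.proj ℛ) (matPieceProj 𝒮 a)
    (GradedAlgebra.proj_comp_subtype_self ℛ) (fun _ _ => GradedAlgebra.proj_comp_subtype_of_ne ℛ)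
    (matPieceProj_comp_subtype_self 𝒮 a)

lemma collapse_eq_congr_matOneAlgEquiv (x : R ⊗[k] Matrix (Fin 1) (Fin 1) S) :
    collapse k R S x =
      Algebra.TensorProduct.congr (AlgEquiv.refl : R ≃ₐ[k] R) matOneAlgEquiv x := by
  induction x using TensorProduct.induction_on with
  | zero => rw [map_zero, map_zero]
  | tmul r m => rfl
  | add x y hx hy => simp only [map_add, hx, hy]

lemma map_collapse_segrePiece (i : ℤ) :
    (segrePiece k R ℛ S 𝒮 1 i).map (collapse k R S).toLinearMap =
      LinearMap.range (mapIncl (ℛ i) (𝒮 i)) := by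
  have hcollapse : (collapse k R S).toLinearMap = map LinearMap.id (matOne k S).toLinearMap := rfl
  rw [segrePiece, ← LinearMap.range_comp, hcollapse, ← map_comp, range_map, range_map,
    LinearMap.range_comp, LinearMap.range_comp, Submodule.range_subtype, Submodule.range_subtype,
    map_matOne_matPiece]
  simp

end segrePiece

theorem aSegre_graded_algebra (a : ℕ) :
    -- the `a`-Segre product is a unital …
    ((1 : A ⊗[k] Matrix (Fin a) (Fin a) B) ∈ segrePiece k A 𝒜 B ℬ a 0) ∧
    -- … multiplicatively closed (hence, being a subalgebra of the associative algebra
    -- `A ⊗ₖ Matrix B` with the matrix-and-tensor multiplication, associative) …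
    (∀ (i j : ℤ) (x y : A ⊗[k] Matrix (Fin a) (Fin a) B),
      x ∈ segrePiece k A 𝒜 B ℬ a i → y ∈ segrePiece k A 𝒜 B ℬ a j →
        x * y ∈ segrePiece k A 𝒜 B ℬ a (i + j)) ∧
    -- … graded family of pieces:
    (iSupIndep fun i : ℤ => segrePiece k A 𝒜 B ℬ a i) ∧
    -- for `a = 1` it coincides with the usual Segre product:
    (∀ x y : A ⊗[k] Matrix (Fin 1) (Fin 1) B,
      collapse k A B (x * y) = collapse k A B x * collapse k A B y) ∧
    (collapse k A B (1 : A ⊗[k] Matrix (Fin 1) (Fin 1) B) = 1) ∧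
    (∀ i : ℤ, Submodule.map (collapse k A B).toLinearMap (segrePiece k A 𝒜 B ℬ 1 i)
      = LinearMap.range (TensorProduct.map (𝒜 i).subtype (ℬ i).subtype)) := by
  refine ⟨one_mem_segrePiece 𝒜 ℬ a, ?_, iSupIndep_segrePiece 𝒜 ℬ a, ?_, ?_,
    map_collapse_segrePiece 𝒜 ℬ⟩
  · intro i j x y hx hy
    exact segrePiece_mul_le 𝒜 ℬ a i j (Submodule.mul_mem_mul hx hy)
  · intro x y
    simp only [collapse_eq_congr_matOneAlgEquiv, map_mul]
  · simp only [collapse_eq_congr_matOneAlgEquiv, map_one]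

end
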